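/- Let I_s > 0, V_T > 0, R > 0, R_L > 0. Define P_harv(q) = R_L·(q + I_s − (V_T/R)·W₀((I_s·R/V_T)·exp((R/V_T)·(q + I_s))))² for q ≥ 0. Then P_harv(q) ≥ 0 for all q ≥ 0, P_harv is strictly increasing on (0,∞), and P_harv(0) = 0. -/

import Mathlib

/-- Principal branch of the Lambert W function on `[0, ∞)`:
for `x ≥ 0`, `W0 x` is the unique `y ≥ 0` with `y * exp y = x`. -/
noncomputable def W0 (x : ℝ) : ℝ :=
  Function.invFunOn (fun y : ℝ => y * Real.exp y) (Set.Ici 0) x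

lemma W0_spec {x : ℝ} (hx : 0 ≤ x) :
    0 ≤ W0 x ∧ W0 x * Real.exp (W0 x) = x := by
  have hex : ∃ y ∈ Set.Ici (0:ℝ), (fun y : ℝ => y * Real.exp y) y = x := by
    have hc : ContinuousOn (fun y : ℝ => y * Real.exp y) (Set.Icc 0 x) :=
      (continuous_id.mul Real.continuous_exp).continuousOn
    have hmem : x ∈ Set.Icc ((0:ℝ) * Real.exp 0) (x * Real.exp x) := by
      constructor
      · simpa using hx
      · nlinarith [Real.one_le_exp hx]
    obtain ⟨y, hy, hfy⟩ := intermediate_value_Icc hx hc hmem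
    exact ⟨y, hy.1, hfy⟩
  refine ⟨Function.invFunOn_mem hex, Function.invFunOn_eq hex⟩

theorem harvested_power_nonneg_strictMono
    (Is VT R RL : ℝ) (hIs : 0 < Is) (hVT : 0 < VT) (hR : 0 < R) (hRL : 0 < RL)
    (P : ℝ → ℝ)
    (hP : ∀ q : ℝ, P q =
      RL * (q + Is - (VT / R) * W0 ((Is * R / VT) * Real.exp ((R / VT) * (q + Is)))) ^ 2) :
    (∀ q : ℝ, 0 ≤ q → 0 ≤ P q) ∧ StrictMonoOn P (Set.Ioi 0) ∧ P 0 = 0 := by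
  have ha : 0 < R / VT := div_pos hR hVT
  set a : ℝ := R / VT with ha_def
  set c : ℝ := a * Is with hc_def
  have hc : 0 < c := mul_pos ha hIs
  -- the strictly monotone map g u = u + c * exp u
  have hg : StrictMono (fun u : ℝ => u + c * Real.exp u) := by
    intro u v huv
    have := Real.exp_lt_exp.mpr huv
    dsimp only
    nlinarith
  -- the harvested current
  set i : ℝ → ℝ := fun q =>
    q + Is - (VT / R) * W0 ((Is * R / VT) * Real.exp (a * (q + Is))) with hi_def
  have hPi : ∀ q : ℝ, P q = RL * (i q) ^ 2 := fun q => hP q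
  -- key identity : a * (q + Is) = g (a * i q)
  have key : ∀ q : ℝ, a * (q + Is) = a * i q + c * Real.exp (a * i q) := by
    intro q
    set x : ℝ := (Is * R / VT) * Real.exp (a * (q + Is)) with hx_def
    have hxc : x = c * Real.exp (a * (q + Is)) := by
      rw [hx_def, hc_def, ha_def]; ring
    have hx0 : 0 ≤ x := by
      rw [hxc]; positivity
    obtain ⟨hw0, hwe⟩ := W0_spec hx0
    set w : ℝ := W0 x with hw_def
    have haiq : a * i q = a * (q + Is) - w := by
      rw [hi_def]
      dsimp only
      rw [← hx_def, ← hw_def]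
      have hone : a * (VT / R) = 1 := by rw [ha_def]; field_simp
      linear_combination (-w) * hone
    rw [haiq]
    have hwe' : w * Real.exp w = c * Real.exp (a * (q + Is)) := by
      rw [hwe, hxc]
    have hexp : Real.exp (a * (q + Is) - w) = Real.exp (a * (q + Is)) / Real.exp w :=
      Real.exp_sub _ _
    have hne := Real.exp_ne_zero w
    rw [hexp]
    field_simp
    nlinarith [hwe']
  -- i 0 = 0
  have hi0 : i 0 = 0 := by
    have h0 : a * ((0:ℝ) + Is) = a * i 0 + c * Real.exp (a * i 0) := key 0
    have hg0 : (fun u : ℝ => u + c * Real.exp u) (a * i 0) =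
        (fun u : ℝ => u + c * Real.exp u) 0 := by
      dsimp only
      rw [Real.exp_zero]
      nlinarith [h0]
    have h := hg.injective hg0
    exact (mul_eq_zero.mp h).resolve_left (ne_of_gt ha)
  -- i q > 0 for q > 0
  have hipos : ∀ q : ℝ, 0 < q → 0 < i q := by
    intro q hq
    have h1 : (fun u : ℝ => u + c * Real.exp u) 0 <
        (fun u : ℝ => u + c * Real.exp u) (a * i q) := by
      dsimp only
      rw [Real.exp_zero, ← key q]
      nlinarith
    have := hg.lt_iff_lt.mp h1
    nlinarith
  -- i strictly increasing
  have himono : ∀ q1 q2 : ℝ, q1 < q2 → i q1 < i q2 := by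
    intro q1 q2 h12
    have h1 : (fun u : ℝ => u + c * Real.exp u) (a * i q1) <
        (fun u : ℝ => u + c * Real.exp u) (a * i q2) := by
      dsimp only
      rw [← key q1, ← key q2]
      nlinarith
    have := hg.lt_iff_lt.mp h1
    nlinarith
  refine ⟨?_, ?_, ?_⟩
  · intro q _
    rw [hPi]
    positivity
  · intro q1 hq1 q2 hq2 h12
    rw [hPi, hPi]
    have h1 := hipos q1 hq1
    have h2 := himono q1 q2 h12
    nlinarith [mul_pos hRL (mul_pos (sub_pos.mpr h2) (show 0 < i q1 + i q2 by linarith))]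
  · rw [hPi, hi0]
    ring
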